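/- arXiv:1205.1248 — 5 statements merged into one kernel-verified Lean document; each statement's English description precedes it below -/
import Mathlib

section
/- Let d be the discriminant of a list of integers (determinant of the associated tridiagonal matrix). For any list A of length r > 1, writing Ā for A with the first entry removed and A̲ for A with the last entry removed, one has d(Ā) * d(A̲) - d(A) * d(Ā̲) = 1, where Ā̲ is A with both the first and last entry removed. -/
/-- Discriminant of a linear chain: determinant of the tridiagonal matrix. -/
def chainD : List ℤ → ℤ
  | [] => 1
  | [a] => a
  | a :: b :: L => a * chainD (b :: L) - chainD L

/-- A list is admissible if it is nonempty and all entries are at least 2. -/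
def Admissible (A : List ℤ) : Prop := A ≠ [] ∧ ∀ x ∈ A, 2 ≤ x

/-- Inductance e(A) = d(Ā)/d(A). -/
def inductance (A : List ℤ) : ℚ := (chainD A.tail : ℚ) / (chainD A : ℚ)

/-- Plumbing concatenation ⋆ of linear chains. -/
def pstar : List ℤ → List ℤ → List ℤ
  | [], B => B
  | A, [] => A
  | [a], b :: B => (a + b - 1) :: B
  | a :: A, B => a :: pstar A B

/-- TW n : the list of n copies of 2. -/
def TW (n : ℕ) : List ℤ := List.replicate n 2

theorem chainD_cons (a : ℤ) {L : List ℤ} (hL : L ≠ []) :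
    chainD (a :: L) = a * chainD L - chainD L.tail := by
  obtain ⟨b, L, rfl⟩ := List.exists_cons_of_ne_nil hL
  rfl

theorem chainD_tail_dropLast (A : List ℤ) (h : 1 < A.length) :
    chainD A.tail * chainD A.dropLast - chainD A * chainD A.tail.dropLast = 1 := by
  match A, h with
  | [a, b], _ => simp only [List.tail_cons, List.dropLast, chainD]; ring
  | a :: b :: c :: L, _ =>
    -- expanding `d(A)` and `d(A̲)` along `a`, the `a`-terms cancel and the identity for `Ā` is left
    have ih := chainD_tail_dropLast (b :: c :: L) (by simp)
    rw [List.tail_cons, List.dropLast_cons_of_ne_nil (by simp), chainD_cons a (by simp),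
      chainD_cons a (by simp), List.tail_dropLast]
    linear_combination ih
end

section
/- If A = [a_1, ..., a_r] is a nonempty list of integers with every a_i ≥ 2, then gcd(d(A), d(Ā)) = 1 and d(A) > d(Ā) > 0, where Ā = [a_2, ..., a_r] and d is the discriminant of the list. -/
theorem isCoprime_chainD_tail : ∀ A : List ℤ, IsCoprime (chainD A) (chainD A.tail)
  | [] => isCoprime_one_left
  | [_] => isCoprime_one_right
  | a :: b :: L => by
    have hprev : IsCoprime (chainD L) (chainD (b :: L)) := (isCoprime_chainD_tail (b :: L)).symm
    -- a Euclidean step: modulo d(b :: L) the recursion leaves -d(L)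
    show IsCoprime (a * chainD (b :: L) - chainD L) (chainD (b :: L))
    rw [← neg_add_eq_sub]
    exact hprev.neg_left.add_mul_right_left a

theorem chainD_pos_and_lt_chainD_cons {a : ℤ} {A : List ℤ} (ha : 2 ≤ a) (hA : ∀ x ∈ A, 2 ≤ x) :
    0 < chainD A ∧ chainD A < chainD (a :: A) := by
  induction A generalizing a with
  | nil => exact ⟨one_pos, show (1 : ℤ) < a by omega⟩
  | cons b L ih =>
    obtain ⟨hb, hLge⟩ := List.forall_mem_cons.mp hA
    obtain ⟨hLpos, hLlt⟩ := ih hb hLge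
    have hbL : 0 < chainD (b :: L) := hLpos.trans hLlt
    refine ⟨hbL, ?_⟩
    show chainD (b :: L) < a * chainD (b :: L) - chainD L
    nlinarith [mul_le_mul_of_nonneg_right ha hbL.le]

theorem chainD_admissible (A : List ℤ) (hA : Admissible A) :
    Int.gcd (chainD A) (chainD A.tail) = 1 ∧
    chainD A.tail < chainD A ∧ 0 < chainD A.tail := by
  obtain ⟨hne, hge⟩ := hA
  obtain ⟨a, A, rfl⟩ := List.exists_cons_of_ne_nil hne
  obtain ⟨ha, hA⟩ := List.forall_mem_cons.mp hge
  obtain ⟨hpos, hlt⟩ := chainD_pos_and_lt_chainD_cons ha hA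
  exact ⟨Int.isCoprime_iff_gcd_eq_one.mp (isCoprime_chainD_tail _), hlt, hpos⟩
end

section
/- The inductance function e, from the set of admissible lists of integers to the rational numbers in the open interval (0,1), given by e(A) = d(Ā)/d(A), is injective. -/
/-!
Expanding `chainD` along its first entry gives `e(a :: L) = 1 / (a - e(L))`, with `e(L)` read as `0`
when `L` is empty (not as `inductance [] = 1`). Hence `e(A)` is the reciprocal of the Hirzebruch–Jung continued fraction
`a₁ - 1/(a₂ - 1/(⋯ - 1/aₙ))`. Because all entries are at least `2`, the value of every tail lies in
`[0, 1)`, so the first entry is recovered as `⌈1 / e(A)⌉`, and then `e` of the tail as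
`a₁ - 1 / e(A)`; injectivity follows by induction on the length.
-/

/-- The reciprocal of the Hirzebruch–Jung continued fraction `a₁ - 1/(a₂ - 1/(⋯ - 1/aₙ))`;
the empty fraction is `∞`, with reciprocal `0`. -/
def invHJContFrac : List ℤ → ℚ
  | [] => 0
  | a :: L => ((a : ℚ) - invHJContFrac L)⁻¹

section Bounds

variable {a : ℤ} {L : List ℤ}

theorem chainD_pos_and_lt_cons (h : ∀ x ∈ a :: L, 2 ≤ x) :
    0 < chainD L ∧ chainD L < chainD (a :: L) := by
  induction L generalizing a with
  | nil =>
    have ha : 2 ≤ a := h a List.mem_cons_self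
    simp only [chainD]
    omega
  | cons b M ih =>
    have ha : 2 ≤ a := h a List.mem_cons_self
    obtain ⟨hM, hMb⟩ := ih fun x hx => h x (List.mem_cons_of_mem a hx)
    refine ⟨hM.trans hMb, ?_⟩
    simp only [chainD]
    nlinarith

theorem invHJContFrac_nonneg_and_lt_one (hL : ∀ x ∈ L, 2 ≤ x) :
    0 ≤ invHJContFrac L ∧ invHJContFrac L < 1 := by
  induction L with
  | nil => simp [invHJContFrac]
  | cons a M ih =>
    have ha : (2 : ℚ) ≤ a := by exact_mod_cast hL a List.mem_cons_self
    have hM := (ih fun x hx => hL x (List.mem_cons_of_mem a hx)).2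
    have hden : 1 < (a : ℚ) - invHJContFrac M := by linarith
    exact ⟨inv_nonneg.2 (by linarith), inv_lt_one_of_one_lt₀ hden⟩

theorem invHJContFrac_cons_pos (ha : 2 ≤ a) (hL : ∀ x ∈ L, 2 ≤ x) :
    0 < invHJContFrac (a :: L) := by
  have ha' : (2 : ℚ) ≤ a := by exact_mod_cast ha
  have := (invHJContFrac_nonneg_and_lt_one hL).2
  exact inv_pos.2 (by linarith)

theorem ceil_sub_invHJContFrac (a : ℤ) (hL : ∀ x ∈ L, 2 ≤ x) :
    ⌈(a : ℚ) - invHJContFrac L⌉ = a := by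
  obtain ⟨h0, h1⟩ := invHJContFrac_nonneg_and_lt_one hL
  rw [Int.ceil_eq_iff]
  constructor <;> linarith

end Bounds

theorem invHJContFrac_injOn : Set.InjOn invHJContFrac {L | ∀ x ∈ L, 2 ≤ x} := by
  intro L hL M hM h
  induction L generalizing M with
  | nil =>
    cases M with
    | nil => rfl
    | cons b M =>
      exact absurd h.symm (invHJContFrac_cons_pos (hM b List.mem_cons_self)
        fun x hx => hM x (List.mem_cons_of_mem b hx)).ne'
  | cons a L ih =>
    have hL' : ∀ x ∈ L, 2 ≤ x := fun x hx => hL x (List.mem_cons_of_mem a hx)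
    cases M with
    | nil => exact absurd h (invHJContFrac_cons_pos (hL a List.mem_cons_self) hL').ne'
    | cons b M =>
      have hM' : ∀ x ∈ M, 2 ≤ x := fun x hx => hM x (List.mem_cons_of_mem b hx)
      have hsub : (a : ℚ) - invHJContFrac L = b - invHJContFrac M := inv_injective h
      have hab : a = b := by
        rw [← ceil_sub_invHJContFrac a hL', hsub, ceil_sub_invHJContFrac b hM']
      subst hab
      rw [ih hL' hM' (by linarith)]

theorem inductance_eq_invHJContFrac {A : List ℤ} (hA : Admissible A) :
    inductance A = invHJContFrac A := by
  induction A using chainD.induct with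
  | case1 => exact absurd rfl hA.1
  | case2 a => simp [inductance, invHJContFrac, chainD]
  | case3 a b L ih =>
    have hB : Admissible (b :: L) :=
      ⟨List.cons_ne_nil b L, fun x hx => hA.2 x (List.mem_cons_of_mem a hx)⟩
    have hD : (chainD (b :: L) : ℚ) ≠ 0 := by
      exact_mod_cast (chainD_pos_and_lt_cons hA.2).1.ne'
    rw [invHJContFrac, ← ih hB, inductance, inductance, List.tail_cons, List.tail_cons,
      sub_div' hD, inv_div, chainD]
    push_cast
    rfl

theorem inductance_injective (A B : List ℤ) (hA : Admissible A) (hB : Admissible B)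
    (h : inductance A = inductance B) : A = B := by
  rw [inductance_eq_invHJContFrac hA, inductance_eq_invHJContFrac hB] at h
  exact invHJContFrac_injOn hA.2 hB.2 h
end

section
/- The inductance function e, from the set of admissible lists of integers to the rational numbers in the open interval (0,1), given by e(A) = d(Ā)/d(A), is surjective: for every rational q with 0 < q < 1 there exists an admissible list A with e(A) = q. -/
lemma admissible_cons_iff {a : ℤ} {B : List ℤ} :
    Admissible (a :: B) ↔ 2 ≤ a ∧ ∀ x ∈ B, 2 ≤ x := by
  simp [Admissible]

lemma chainD_cons_of_ne_nil (a : ℤ) {B : List ℤ} (hB : B ≠ []) :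
    chainD (a :: B) = a * chainD B - chainD B.tail := by
  cases B with
  | nil => exact absurd rfl hB
  | cons b L => rfl

lemma chainD_ne_zero_of_inductance_ne_zero {A : List ℤ} (h : inductance A ≠ 0) :
    chainD A ≠ 0 := by
  rintro hA
  simp [inductance, hA] at h

lemma inductance_singleton (a : ℤ) : inductance [a] = (a : ℚ)⁻¹ := by
  simp [inductance, chainD]

lemma inductance_cons (a : ℤ) {B : List ℤ} (hB : B ≠ []) (hd : chainD B ≠ 0) :
    inductance (a :: B) = ((a : ℚ) - inductance B)⁻¹ := by
  have hd' : (chainD B : ℚ) ≠ 0 := by exact_mod_cast hd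
  rw [inductance, inductance, List.tail_cons, chainD_cons_of_ne_nil a hB]
  push_cast
  field_simp

lemma Rat.den_ceil_inv_sub_inv_lt {q : ℚ} (h0 : 0 < q) (h1 : q < 1) :
    ((⌈q⁻¹⌉ : ℚ) - q⁻¹).den < q.den := by
  rw [Rat.intCast_sub_den, Rat.den_inv_of_ne_zero h0.ne']
  have hpos : 0 < q.num := Rat.num_pos.2 h0
  have hlt : q.num < q.den := Rat.num_lt_denom_iff.2 h1
  omega

theorem inductance_surjective (q : ℚ) (h0 : 0 < q) (h1 : q < 1) :
    ∃ A : List ℤ, Admissible A ∧ inductance A = q := by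
  induction hd : q.den using Nat.strong_induction_on generalizing q with
  | _ n ih =>
  have hinv : 1 < q⁻¹ := (one_lt_inv₀ h0).2 h1
  by_cases hint : (q⁻¹).den = 1
  · have hn : ((q⁻¹).num : ℚ) = q⁻¹ := Rat.coe_int_num_of_den_eq_one hint
    have hn2 : 1 < (q⁻¹).num := by exact_mod_cast hn ▸ hinv
    exact ⟨[(q⁻¹).num], admissible_cons_iff.2 ⟨hn2, by simp⟩,
      by rw [inductance_singleton, hn, inv_inv]⟩
  · set a := ⌈q⁻¹⌉
    have ha_ne : (a : ℚ) ≠ q⁻¹ := fun h => hint (h ▸ Rat.den_intCast a)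
    have hr0 : 0 < (a : ℚ) - q⁻¹ := sub_pos.2 ((Int.le_ceil _).lt_of_ne' ha_ne)
    have hr1 : (a : ℚ) - q⁻¹ < 1 := by linarith [Int.ceil_lt_add_one q⁻¹]
    have ha : 1 < a := Int.lt_ceil.2 (by exact_mod_cast hinv)
    obtain ⟨B, hB, hBe⟩ := ih _ (hd ▸ Rat.den_ceil_inv_sub_inv_lt h0 h1) _ hr0 hr1 rfl
    refine ⟨a :: B, admissible_cons_iff.2 ⟨ha, hB.2⟩, ?_⟩
    rw [inductance_cons a hB.1 (chainD_ne_zero_of_inductance_ne_zero (hBe ▸ hr0.ne')), hBe,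
      sub_sub_cancel, inv_inv]
end

section
/- If A and B are admissible lists of integers with e(A) + e(B) = 1, then d(A) = d(B) and moreover e(A.reverse) + e(B.reverse) = 1. -/
open Matrix

def chainMatrix (A : List ℤ) : Matrix (Fin 2) (Fin 2) ℤ :=
  (A.map fun a => !![a, -1; 1, 0]).prod

lemma chainMatrix_nil : chainMatrix [] = 1 := rfl

lemma chainMatrix_cons (a : ℤ) (L : List ℤ) :
    chainMatrix (a :: L) = !![a, -1; 1, 0] * chainMatrix L := by
  simp [chainMatrix]

lemma chainMatrix_append (L M : List ℤ) :
    chainMatrix (L ++ M) = chainMatrix L * chainMatrix M := by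
  simp [chainMatrix]

lemma chainMatrix_det (A : List ℤ) : (chainMatrix A).det = 1 := by
  induction A with
  | nil => simp [chainMatrix_nil]
  | cons a L ih => rw [chainMatrix_cons, det_mul, ih, det_fin_two_of]; ring

lemma chainMatrix_cons_one_zero (a : ℤ) (L : List ℤ) :
    chainMatrix (a :: L) 1 0 = chainMatrix L 0 0 := by
  simp [chainMatrix_cons, mul_apply, Fin.sum_univ_two]

lemma chainMatrix_zero_zero (A : List ℤ) : chainMatrix A 0 0 = chainD A := by
  induction A using chainD.induct with
  | case1 => simp [chainMatrix_nil, chainD]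
  | case2 a => simp [chainMatrix, chainD]
  | case3 a b L ih ih' =>
    rw [chainD, ← ih, ← ih', ← chainMatrix_cons_one_zero b L, chainMatrix_cons a]
    simp [mul_apply, Fin.sum_univ_two, sub_eq_add_neg]

lemma chainMatrix_reverse (A : List ℤ) :
    chainMatrix A.reverse =
      !![chainMatrix A 0 0, -chainMatrix A 1 0; -chainMatrix A 0 1, chainMatrix A 1 1] := by
  induction A with
  | nil => simp [chainMatrix_nil, one_fin_two]
  | cons a L ih =>
    rw [List.reverse_cons, chainMatrix_append, ih, chainMatrix_cons, chainMatrix_cons,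
      chainMatrix_nil, Matrix.mul_one, eta_fin_two (chainMatrix L)]
    ext i j
    fin_cases i <;> fin_cases j <;> simp <;> ring

lemma chainD_reverse (A : List ℤ) : chainD A.reverse = chainD A := by
  rw [← chainMatrix_zero_zero, chainMatrix_reverse]
  simp [chainMatrix_zero_zero]

lemma chainMatrix_one_zero {A : List ℤ} (hA : A ≠ []) : chainMatrix A 1 0 = chainD A.tail := by
  obtain ⟨a, L, rfl⟩ := List.exists_cons_of_ne_nil hA
  rw [chainMatrix_cons_one_zero, chainMatrix_zero_zero, List.tail_cons]

lemma chainMatrix_zero_one {A : List ℤ} (hA : A ≠ []) :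
    chainMatrix A 0 1 = -chainD A.dropLast := by
  have h := chainMatrix_one_zero (List.reverse_ne_nil_iff.mpr hA)
  rw [chainMatrix_reverse, List.tail_reverse, chainD_reverse] at h
  simpa using congrArg Neg.neg h

lemma chainD_dvd_tail_mul_dropLast_sub_one (A : List ℤ) :
    chainD A ∣ chainD A.tail * chainD A.dropLast - 1 := by
  rcases eq_or_ne A [] with rfl | hA
  · simp [chainD]
  · have h := chainMatrix_det A
    rw [det_fin_two, chainMatrix_zero_zero, chainMatrix_zero_one hA, chainMatrix_one_zero hA] at h
    exact ⟨-chainMatrix A 1 1, by linarith⟩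

lemma Admissible.reverse {A : List ℤ} (hA : Admissible A) : Admissible A.reverse :=
  ⟨List.reverse_ne_nil_iff.mpr hA.1, fun x hx => hA.2 x (List.mem_reverse.mp hx)⟩

lemma Admissible.chainD_tail_pos_lt {A : List ℤ} (hA : Admissible A) :
    0 < chainD A.tail ∧ chainD A.tail < chainD A := by
  induction A using chainD.induct with
  | case1 => exact absurd rfl hA.1
  | case2 a =>
    have ha := hA.2 a (List.mem_singleton_self a)
    simp only [List.tail_cons, chainD]
    omega
  | case3 a b L ih _ =>
    have ha : 2 ≤ a := hA.2 a List.mem_cons_self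
    obtain ⟨hpos, hlt⟩ :=
      ih ⟨List.cons_ne_nil b L, fun x hx => hA.2 x (List.mem_cons_of_mem a hx)⟩
    simp only [List.tail_cons, chainD] at hpos hlt ⊢
    constructor <;> nlinarith

lemma Admissible.chainD_pos {A : List ℤ} (hA : Admissible A) : 0 < chainD A :=
  hA.chainD_tail_pos_lt.1.trans hA.chainD_tail_pos_lt.2

lemma Admissible.chainD_dropLast_pos_lt {A : List ℤ} (hA : Admissible A) :
    0 < chainD A.dropLast ∧ chainD A.dropLast < chainD A := by
  simpa only [List.tail_reverse, chainD_reverse] using hA.reverse.chainD_tail_pos_lt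

lemma inductance_reverse (A : List ℤ) :
    inductance A.reverse = chainD A.dropLast / chainD A := by
  rw [inductance, List.tail_reverse, chainD_reverse, chainD_reverse]

lemma isCoprime_of_dvd_mul_sub_one {R : Type*} [CommRing R] {a x y : R} (h : a ∣ x * y - 1) :
    IsCoprime a x := by
  obtain ⟨k, hk⟩ := h
  exact ⟨-k, y, by linear_combination hk⟩

lemma eq_of_dvd_mul_sub_one_of_mul_add_mul_eq_mul {a b a' b' a'' b'' : ℤ} (ha : 0 < a)
    (hb : 0 < b) (hA : a ∣ a' * a'' - 1) (hB : b ∣ b' * b'' - 1) (h : a' * b + a * b' = a * b) :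
    a = b := by
  have hab : a ∣ b := (isCoprime_of_dvd_mul_sub_one hA).dvd_of_dvd_mul_left
    ⟨b - b', by linarith⟩
  have hba : b ∣ a := (isCoprime_of_dvd_mul_sub_one hB).dvd_of_dvd_mul_left
    ⟨a - a', by linarith⟩
  exact Int.dvd_antisymm ha.le hb.le hab hba

lemma add_eq_of_dvd_mul_sub_one_of_add_eq {a a' b' a'' b'' : ℤ} (hA : a ∣ a' * a'' - 1)
    (hB : a ∣ b' * b'' - 1) (h : a' + b' = a) (ha'' : 0 < a'') (hb'' : 0 < b'') (ha''a : a'' < a)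
    (hb''a : b'' < a) :
    a'' + b'' = a := by
  have hdvd : a ∣ a'' + b'' := (isCoprime_of_dvd_mul_sub_one hA).dvd_of_dvd_mul_left <| by
    have : a' * (a'' + b'') = (a' * a'' - 1) - (b' * b'' - 1) + a * b'' := by
      rw [← h]; ring
    rw [this]
    exact dvd_add (hA.sub hB) (dvd_mul_right a b'')
  obtain ⟨k, hk⟩ := hdvd
  have hk1 : k = 1 := by nlinarith
  rw [hk, hk1, mul_one]

theorem inductance_add_eq_one (A B : List ℤ) (hA : Admissible A) (hB : Admissible B)
    (h : inductance A + inductance B = 1) :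
    chainD A = chainD B ∧ inductance A.reverse + inductance B.reverse = 1 := by
  have hdA : (chainD A : ℚ) ≠ 0 := by exact_mod_cast hA.chainD_pos.ne'
  have hdB : (chainD B : ℚ) ≠ 0 := by exact_mod_cast hB.chainD_pos.ne'
  have hsum : chainD A.tail * chainD B + chainD A * chainD B.tail = chainD A * chainD B := by
    rw [inductance, inductance, div_add_div _ _ hdA hdB,
      div_eq_one_iff_eq (mul_ne_zero hdA hdB)] at h
    exact_mod_cast h
  have hAB : chainD A = chainD B :=
    eq_of_dvd_mul_sub_one_of_mul_add_mul_eq_mul hA.chainD_pos hB.chainD_pos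
      (chainD_dvd_tail_mul_dropLast_sub_one A) (chainD_dvd_tail_mul_dropLast_sub_one B) hsum
  have htail : chainD A.tail + chainD B.tail = chainD A :=
    mul_left_cancel₀ hA.chainD_pos.ne' (by rw [← hAB] at hsum; linarith)
  obtain ⟨hA'pos, hA'lt⟩ := hA.chainD_dropLast_pos_lt
  obtain ⟨hB'pos, hB'lt⟩ := hB.chainD_dropLast_pos_lt
  have hdropLast : chainD A.dropLast + chainD B.dropLast = chainD A :=
    add_eq_of_dvd_mul_sub_one_of_add_eq (chainD_dvd_tail_mul_dropLast_sub_one A)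
      (hAB ▸ chainD_dvd_tail_mul_dropLast_sub_one B) htail hA'pos hB'pos hA'lt (hAB ▸ hB'lt)
  refine ⟨hAB, ?_⟩
  rw [inductance_reverse, inductance_reverse, ← hAB, ← add_div, ← Int.cast_add, hdropLast,
    div_self hdA]
end
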